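/- Suppose for each 0 ≤ i ≤ m we are given a statistic S_i : ⋃_{n≥0} PK(n) → ℕ and a constant c_i ∈ ℕ such that (i) S_i is equidistributed with luck, i.e. #{p ∈ PK(n) : S_i(p) = k} = C_{n,k} for all n ≥ 0 and k ≥ 0, and (ii) S_i(p) = S_i(P_{i+1}) + c_i for every n ≥ 1 and every p ∈ PK(n) with first-return decomposition (P_1, …, P_{m+1}). Then for every n ≥ 1, the identity Σ_{p ∈ PK(n)} ∏_{i=0}^{m} q_i^{S_i(p)} = (∏_{i=0}^{m} q_i^{c_i}) · Σ over all weak compositions (α_0, …, α_m) of n−1 of ∏_{i=0}^{m} R_{α_i}(q_i) holds in ℤ[q_0,…,q_m]. -/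

import Mathlib

open scoped Classical
open Finset

noncomputable section

/-- The set of positive nondecreasing sequences of length `n` bounded above by `b` is finite. -/
lemma boundedSeq_finite (n : ℕ) (b : ℕ → ℕ) :
    {p : Fin n → ℕ | Monotone p ∧ ∀ i : Fin n, 1 ≤ p i ∧ p i ≤ b i}.Finite := by
  have h : {p : Fin n → ℕ | Monotone p ∧ ∀ i : Fin n, 1 ≤ p i ∧ p i ≤ b i} ⊆
      Set.pi Set.univ (fun i : Fin n => Set.Iic (b i)) := by
    intro p hp
    rw [Set.mem_pi]
    intro i _
    exact (hp.2 i).2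
  exact (Set.Finite.pi fun i : Fin n => Set.finite_Iic (b (i : ℕ))).subset h

/-- The finset of nondecreasing sequences `p : Fin n → ℕ` of positive integers
with `p i ≤ b i` for all `i`. -/
def BSeq (n : ℕ) (b : ℕ → ℕ) : Finset (Fin n → ℕ) := (boundedSeq_finite n b).toFinset

/-- `PK m n` : the u-parking distributions of length `n`, i.e. nondecreasing sequences
of positive integers with `p i ≤ m*(i-1)+1` (here indexed from `0`, so `p i ≤ m*i+1`). -/
def PK (m n : ℕ) : Finset (Fin n → ℕ) := BSeq n (fun i => m * i + 1)

/-- `luck p` : the number of indices `i` with `p i = m*(i-1)+1` (0-indexed: `m*i+1`). -/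
def luck (m : ℕ) {n : ℕ} (p : Fin n → ℕ) : ℕ :=
  (Finset.univ.filter (fun i : Fin n => p i = m * (i : ℕ) + 1)).card

/-- `freq j p` = `ω_j(p)` : the number of indices `i` with `p i = j`. -/
def freq (j : ℕ) {n : ℕ} (p : Fin n → ℕ) : ℕ :=
  (Finset.univ.filter (fun i : Fin n => p i = j)).card

/-- `hcnt m n k r` = `h_{n,k,r}` : the number of nondecreasing sequences of positive
integers with `p_i ≤ m*(i+k-1) - r` for `1 ≤ i ≤ n` (0-indexed: `p i ≤ m*(i+k) - r`). -/
def hcnt (m n k r : ℕ) : ℕ := (BSeq n (fun i => m * (i + k) - r)).card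

/-- `Cnt m n k` = `C_{n,k}` : the number of `p ∈ PK m n` with `luck p = k`. -/
def Cnt (m n k : ℕ) : ℕ := ((PK m n).filter (fun p => luck m p = k)).card

/-- `Rpoly m n` = `R_n(q) = Σ_k C_{n,k} q^k ∈ ℤ[q]`. -/
def Rpoly (m n : ℕ) : Polynomial ℤ :=
  ∑ k ∈ Finset.range (n + 1), (Cnt m n k : Polynomial ℤ) * Polynomial.X ^ k

/-- `hfull t k` : the complete homogeneous symmetric polynomial of degree `k`
in variables `q_0, …, q_{t-1}`, i.e. the sum of all monomials of total degree `k`. -/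
def hfull (t k : ℕ) : MvPolynomial (Fin t) ℤ :=
  ∑ α ∈ Finset.Nat.antidiagonalTuple t k, ∏ i : Fin t, MvPolynomial.X i ^ α i

/-- `ffix m p ℓ` = `i_ℓ(p)` : the first fixed point of type `ℓ`, the smallest `k` with
`2 ≤ k ≤ n` and `p_k ≥ m*(k-2)+1+ℓ` (1-indexed), or `n+1` if there is none. -/
def ffix (m : ℕ) {n : ℕ} (p : Fin n → ℕ) (ℓ : ℕ) : ℕ :=
  sInf ({k | 2 ≤ k ∧ ∃ i : Fin n, (i : ℕ) + 1 = k ∧ m * (k - 2) + 1 + ℓ ≤ p i} ∪ {n + 1})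

/-- The extended first fixed points: `i_0 = 2`, `i_{m+1} = n+1`, and `i_ℓ = ffix m p ℓ`
for `1 ≤ ℓ ≤ m`. -/
def ffixE (m : ℕ) {n : ℕ} (p : Fin n → ℕ) (j : ℕ) : ℕ :=
  if j = 0 then 2 else if j = m + 1 then n + 1 else ffix m p j

/-- `pget p k` = `p_k` (1-indexed), `0` out of range. -/
def pget {n : ℕ} (p : Fin n → ℕ) (k : ℕ) : ℕ := if h : k - 1 < n then p ⟨k - 1, h⟩ else 0

/-- The `(ℓ+1)`-st part `P_{ℓ+1}` (for `0 ≤ ℓ ≤ m`) of the first-return decomposition of `p`: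
the list `(p_k - (p_{i_ℓ} - 1))` for `i_ℓ ≤ k ≤ i_{ℓ+1} - 1`. -/
def FRD (m : ℕ) {n : ℕ} (p : Fin n → ℕ) (ℓ : ℕ) : List ℕ :=
  (List.range (ffixE m p (ℓ + 1) - ffixE m p ℓ)).map
    (fun t => pget p (ffixE m p ℓ + t) - (pget p (ffixE m p ℓ) - 1))

/-- A list is a u-parking distribution: nondecreasing, with `l.get i ∈ [1, m*i+1]`
(0-indexed). -/
def isPKlist (m : ℕ) (l : List ℕ) : Prop :=
  l.Pairwise (· ≤ ·) ∧ ∀ i : Fin l.length, 1 ≤ l.get i ∧ l.get i ≤ m * (i : ℕ) + 1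

/-- `θ(p)` : the nondecreasing rearrangement of the concatenation of `p` with the list of
all `j ∈ {1, …, m*n-m+1}` with `j ≢ 1 (mod m)`. -/
def theta (m n : ℕ) (p : Fin n → ℕ) : List ℕ :=
  Multiset.sort
    ((List.ofFn p : Multiset ℕ) +
      (((List.range (m * n - m + 1)).map (· + 1)).filter
        (fun j => ¬ j ≡ 1 [MOD m]) : List ℕ)) (· ≤ ·)

/-- Parking distributions on the `m`-caterpillar of length `n`, as nondecreasing lists. -/
def PKcat (m n : ℕ) : Set (List ℕ) :=
  {a | a.length = m * n - m + 1 ∧ a.Pairwise (· ≤ ·) ∧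
       (∀ x ∈ a, 1 ≤ x ∧ x ≤ m * n - m + 1) ∧
       (∀ i : ℕ, 1 ≤ i → i ≤ n →
         m * (i - 1) + 1 ≤ (a.filter (fun x => x ≤ m * (i - 1) + 1)).length) ∧
       (∀ j : ℕ, 1 ≤ j → j ≤ m * n - m + 1 → ¬ j ≡ 1 [MOD m] → j ∈ a)}


/-!
The first-return decomposition `p ↦ (P_1, …, P_{m+1})` is a bijection from `PK m n` onto the
tuples of u-parking distributions whose lengths form a weak composition of `n - 1`. On the block
`[i_ℓ, i_{ℓ+1})` the sequence starts exactly at height `m (i_ℓ - 2) + 1 + ℓ` and never exceeds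
`m (k - 2) + 1 + ℓ` at a position `k`, so subtracting its starting height leaves a u-parking
distribution; conversely, gluing shifted parts back together puts the first fixed points at the
partial sums of the lengths. Along this bijection
`∏ q_i^{S_i(p)} = ∏ q_i^{c_i} ∏ q_i^{S_i(P_{i+1})}`, and by equidistribution the sum of
`q_i^{S_i}` over `PK(α_i)` is `R_{α_i}(q_i)`.
-/

lemma sigma_eq_mk {ι : Type*} {x : Σ a : ι → ℕ, ∀ i, Fin (a i) → ℕ} {β : ι → ℕ}
    {g : ∀ i, Fin (β i) → ℕ} (h : x.1 = β)
    (hfg : ∀ i t, x.2 i t = g i (Fin.cast (congrFun h i) t)) : x = ⟨β, g⟩ := by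
  obtain ⟨α, f⟩ := x
  subst h
  exact congrArg _ (funext fun i => funext (hfg i))

lemma mem_PK {m n : ℕ} {p : Fin n → ℕ} :
    p ∈ PK m n ↔ Monotone p ∧ ∀ i : Fin n, 1 ≤ p i ∧ p i ≤ m * i + 1 := by
  simp [PK, BSeq]

section FirstFixedPoints

variable {m n : ℕ} {p : Fin n → ℕ}

lemma pget_eq {k : ℕ} (h1 : 1 ≤ k) (h2 : k ≤ n) : pget p k = p ⟨k - 1, by omega⟩ :=
  dif_pos (by omega)

lemma pget_succ (j : Fin n) : pget p (j + 1) = p j :=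
  pget_eq (by omega) j.isLt

lemma one_le_pget (hp : p ∈ PK m n) {k : ℕ} (h1 : 1 ≤ k) (h2 : k ≤ n) : 1 ≤ pget p k := by
  rw [pget_eq h1 h2]
  exact ((mem_PK.1 hp).2 _).1

lemma pget_le (hp : p ∈ PK m n) {k : ℕ} (h1 : 1 ≤ k) (h2 : k ≤ n) :
    pget p k ≤ m * (k - 1) + 1 := by
  rw [pget_eq h1 h2]
  exact ((mem_PK.1 hp).2 _).2

lemma pget_mono (hp : p ∈ PK m n) {k k' : ℕ} (h1 : 1 ≤ k) (hkk' : k ≤ k') (h2 : k' ≤ n) :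
    pget p k ≤ pget p k' := by
  rw [pget_eq h1 (hkk'.trans h2), pget_eq (h1.trans hkk') h2]
  exact (mem_PK.1 hp).1 (Fin.mk_le_mk.2 (by omega))

lemma ffix_le_succ (ℓ : ℕ) : ffix m p ℓ ≤ n + 1 :=
  Nat.sInf_le (Set.mem_union_right _ rfl)

lemma ffix_le_of_le_pget {ℓ k : ℕ} (h2 : 2 ≤ k) (hkn : k ≤ n)
    (h : m * (k - 2) + 1 + ℓ ≤ pget p k) : ffix m p ℓ ≤ k := by
  refine Nat.sInf_le (Set.mem_union_left _ ⟨h2, ⟨k - 1, by omega⟩, Nat.sub_add_cancel (by omega), ?_⟩)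
  rwa [pget_eq (by omega) hkn] at h

lemma le_pget_ffix {ℓ : ℕ} (h : ffix m p ℓ ≤ n) :
    2 ≤ ffix m p ℓ ∧ m * (ffix m p ℓ - 2) + 1 + ℓ ≤ pget p (ffix m p ℓ) := by
  have hmem := Nat.sInf_mem (⟨n + 1, Set.mem_union_right _ rfl⟩ : Set.Nonempty
    ({k | 2 ≤ k ∧ ∃ i : Fin n, (i : ℕ) + 1 = k ∧ m * (k - 2) + 1 + ℓ ≤ p i} ∪ {n + 1}))
  rw [← ffix] at hmem
  rcases hmem with ⟨h2, i, hi, hle⟩ | hlast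
  · rw [← hi, pget_succ]
    exact ⟨hi ▸ h2, hi ▸ hle⟩
  · exact absurd h (by rw [Set.mem_singleton_iff.1 hlast]; omega)

lemma pget_le_of_lt_ffix {ℓ k : ℕ} (h2 : 2 ≤ k) (hk : k < ffix m p ℓ) (hkn : k ≤ n) :
    pget p k ≤ m * (k - 2) + ℓ := by
  by_contra! h
  exact hk.not_ge (ffix_le_of_le_pget h2 hkn (by omega))

lemma two_le_ffix (hn : 1 ≤ n) (ℓ : ℕ) : 2 ≤ ffix m p ℓ := by
  by_cases h : ffix m p ℓ ≤ n
  · exact (le_pget_ffix h).1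
  · omega

lemma ffix_mono {ℓ ℓ' : ℕ} (h : ℓ ≤ ℓ') : ffix m p ℓ ≤ ffix m p ℓ' := by
  by_cases h' : ffix m p ℓ' ≤ n
  · obtain ⟨h2, hle⟩ := le_pget_ffix h'
    exact ffix_le_of_le_pget h2 h' (by omega)
  · exact (ffix_le_succ ℓ).trans (by omega)

lemma ffix_eq_of {ℓ J : ℕ} (h2 : 2 ≤ J) (hJ : J ≤ n + 1)
    (hat : J ≤ n → m * (J - 2) + 1 + ℓ ≤ pget p J)
    (hbefore : ∀ k, 2 ≤ k → k < J → pget p k ≤ m * (k - 2) + ℓ) : ffix m p ℓ = J := by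
  apply le_antisymm
  · rcases hJ.lt_or_eq with hlt | rfl
    · exact ffix_le_of_le_pget h2 (by omega) (hat (by omega))
    · exact ffix_le_succ ℓ
  · by_contra! hlt
    obtain ⟨h2', hle⟩ := le_pget_ffix (by omega : ffix m p ℓ ≤ n)
    have := hbefore _ h2' hlt
    omega

lemma ffixE_zero : ffixE m p 0 = 2 := rfl

lemma ffixE_last : ffixE m p (m + 1) = n + 1 := by
  simp [ffixE]

lemma ffixE_of_pos_of_le {ℓ : ℕ} (h1 : 0 < ℓ) (h2 : ℓ ≤ m) : ffixE m p ℓ = ffix m p ℓ := by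
  rw [ffixE, if_neg (by omega), if_neg (by omega)]

lemma ffixE_succ_le (ℓ : ℕ) : ffixE m p (ℓ + 1) ≤ n + 1 := by
  rw [ffixE, if_neg (by omega)]
  split_ifs
  · exact le_rfl
  · exact ffix_le_succ _

lemma two_le_ffixE (hn : 1 ≤ n) (ℓ : ℕ) : 2 ≤ ffixE m p ℓ := by
  unfold ffixE
  split_ifs
  exacts [le_rfl, by omega, two_le_ffix hn ℓ]

lemma ffixE_le_succ (hn : 1 ≤ n) (ℓ : ℕ) : ffixE m p ℓ ≤ n + 1 := by
  rcases ℓ with _ | ℓ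
  exacts [by rw [ffixE_zero]; omega, ffixE_succ_le ℓ]

lemma ffixE_mono (hn : 1 ≤ n) {ℓ ℓ' : ℕ} (h : ℓ ≤ ℓ') (h' : ℓ' ≤ m + 1) :
    ffixE m p ℓ ≤ ffixE m p ℓ' := by
  rcases Nat.eq_zero_or_pos ℓ with rfl | hℓ
  · exact two_le_ffixE hn ℓ'
  rcases h'.lt_or_eq with hlt | rfl
  · rw [ffixE_of_pos_of_le hℓ (by omega), ffixE_of_pos_of_le (by omega) (by omega)]
    exact ffix_mono h
  · rw [ffixE_last]
    exact ffixE_le_succ hn ℓ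

lemma pget_le_of_lt_ffixE_succ (hp : p ∈ PK m n) {ℓ k : ℕ} (hℓ : ℓ ≤ m) (h2 : 2 ≤ k)
    (hk : k < ffixE m p (ℓ + 1)) : pget p k ≤ m * (k - 2) + 1 + ℓ := by
  have hkn : k ≤ n := by have := ffixE_succ_le (m := m) (p := p) ℓ; omega
  rcases hℓ.lt_or_eq with hlt | heq
  · rw [ffixE_of_pos_of_le (by omega) hlt] at hk
    have := pget_le_of_lt_ffix h2 hk hkn
    omega
  · have := pget_le hp (by omega) hkn
    have : m * (k - 1) = m * (k - 2) + m := by rw [← Nat.mul_succ]; congr 1; omega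
    omega

lemma pget_ffixE (hp : p ∈ PK m n) (hn : 1 ≤ n) {ℓ : ℕ} (hℓ : ℓ ≤ m)
    (hne : ffixE m p ℓ < ffixE m p (ℓ + 1)) :
    pget p (ffixE m p ℓ) = m * (ffixE m p ℓ - 2) + 1 + ℓ := by
  have h2 := two_le_ffixE (m := m) (p := p) hn ℓ
  have hup := pget_le_of_lt_ffixE_succ hp hℓ h2 hne
  have hkn : ffixE m p ℓ ≤ n := by have := ffixE_succ_le (m := m) (p := p) ℓ; omega
  rcases Nat.eq_zero_or_pos ℓ with rfl | hℓ0
  · have := one_le_pget hp (by omega) hkn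
    rw [ffixE_zero] at *
    omega
  · rw [ffixE_of_pos_of_le hℓ0 hℓ] at *
    have := (le_pget_ffix hkn).2
    omega

end FirstFixedPoints

section FirstReturn

variable {m n : ℕ} {p : Fin n → ℕ}

lemma length_FRD (ℓ : ℕ) : (FRD m p ℓ).length = ffixE m p (ℓ + 1) - ffixE m p ℓ := by
  simp [FRD]

lemma FRD_get {ℓ : ℕ} (t : Fin (FRD m p ℓ).length) :
    (FRD m p ℓ).get t = pget p (ffixE m p ℓ + t) - (pget p (ffixE m p ℓ) - 1) := by
  obtain ⟨t, ht⟩ := t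
  simp only [length_FRD] at ht
  simp [FRD]

lemma FRD_mem_PK (hp : p ∈ PK m n) (hn : 1 ≤ n) {ℓ : ℕ} (hℓ : ℓ ≤ m) :
    (fun t => (FRD m p ℓ).get t) ∈ PK m (FRD m p ℓ).length := by
  have h2 := two_le_ffixE (m := m) (p := p) hn ℓ
  have hlast := ffixE_succ_le (m := m) (p := p) ℓ
  have hlen := length_FRD (m := m) (p := p) ℓ
  refine mem_PK.2 ⟨fun t t' htt' => ?_, fun t => ?_⟩
  · have : t ≤ (t' : ℕ) := htt'
    have := t'.isLt
    have := pget_mono hp (k := ffixE m p ℓ + t) (k' := ffixE m p ℓ + t') (by omega) (by omega)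
      (by omega)
    simp only [FRD_get]
    omega
  · have := t.isLt
    simp only [FRD_get]
    have hstart := pget_ffixE hp hn hℓ (by omega)
    have hup := pget_le_of_lt_ffixE_succ hp hℓ (k := ffixE m p ℓ + t) (by omega) (by omega)
    have hlo := pget_mono hp (k := ffixE m p ℓ) (k' := ffixE m p ℓ + t) (by omega) (by omega)
      (by omega)
    have : m * (ffixE m p ℓ + t - 2) = m * (ffixE m p ℓ - 2) + m * t := by
      rw [← Nat.mul_add]; congr 1; omega
    omega

end FirstReturn

def firstReturn (m : ℕ) {n : ℕ} (p : Fin n → ℕ) : Σ α : Fin (m + 1) → ℕ, ∀ i, Fin (α i) → ℕ :=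
  ⟨fun i => (FRD m p i).length, fun i t => (FRD m p i).get t⟩

def PKParts (m n : ℕ) : Finset (Σ α : Fin (m + 1) → ℕ, ∀ i, Fin (α i) → ℕ) :=
  (Finset.Nat.antidiagonalTuple (m + 1) (n - 1)).sigma fun α =>
    Fintype.piFinset fun i => PK m (α i)

lemma mem_PKParts {m n : ℕ} {x : Σ α : Fin (m + 1) → ℕ, ∀ i, Fin (α i) → ℕ} :
    x ∈ PKParts m n ↔ ∑ i, x.1 i = n - 1 ∧ ∀ i, x.2 i ∈ PK m (x.1 i) := by
  simp [PKParts, Finset.Nat.mem_antidiagonalTuple]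

section Glue

variable {m : ℕ} (α : Fin (m + 1) → ℕ)

def blockStart (ℓ : ℕ) : ℕ := 2 + ∑ i ∈ univ.filter (fun i : Fin (m + 1) => (i : ℕ) < ℓ), α i

def blockIdx (k : ℕ) : Fin (m + 1) :=
  ⟨Nat.findGreatest (fun ℓ => blockStart α ℓ ≤ k) m, Nat.lt_succ_of_le (Nat.findGreatest_le m)⟩

/-- The inverse of the first-return decomposition at the 1-indexed position `k`; the default
value `1` is the one at `k = 1`. -/
def glueAt (g : ∀ i, Fin (α i) → ℕ) (k : ℕ) : ℕ :=
  if h : 2 ≤ k ∧ k - blockStart α (blockIdx α k) < α (blockIdx α k) then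
    g (blockIdx α k) ⟨k - blockStart α (blockIdx α k), h.2⟩
      + m * (blockStart α (blockIdx α k) - 2) + blockIdx α k
  else 1

def glue (n : ℕ) {α : Fin (m + 1) → ℕ} (g : ∀ i, Fin (α i) → ℕ) : Fin n → ℕ :=
  fun j => glueAt α g (j + 1)

lemma blockStart_zero : blockStart α 0 = 2 := by
  simp [blockStart]

lemma blockStart_succ (i : Fin (m + 1)) : blockStart α (i + 1) = blockStart α i + α i := by
  have : univ.filter (fun j : Fin (m + 1) => (j : ℕ) < i + 1) =
      insert i (univ.filter fun j : Fin (m + 1) => (j : ℕ) < i) := by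
    ext j
    simp only [mem_filter, mem_univ, true_and, mem_insert, Fin.ext_iff]
    omega
  rw [blockStart, blockStart, this, sum_insert (by simp)]
  ring

lemma blockStart_last : blockStart α (m + 1) = 2 + ∑ i, α i := by
  simp [blockStart, Fin.is_le]

lemma blockStart_mono : Monotone (blockStart α) := fun a b hab =>
  Nat.add_le_add_left (sum_le_sum_of_subset (fun i => by simp only [mem_filter, mem_univ, true_and]; omega)) 2

lemma two_le_blockStart (ℓ : ℕ) : 2 ≤ blockStart α ℓ := Nat.le_add_right 2 _

variable {α}

lemma blockIdx_eq {k : ℕ} {ℓ : Fin (m + 1)} (h1 : blockStart α ℓ ≤ k)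
    (h2 : k < blockStart α (ℓ + 1)) : blockIdx α k = ℓ := by
  refine Fin.ext (Nat.findGreatest_eq_iff.2 ⟨by omega, fun _ => h1, fun j hj _ hj' => ?_⟩)
  exact (blockStart_mono α (show (ℓ : ℕ) + 1 ≤ j from hj)).not_gt (by omega)

lemma blockStart_last_eq {n : ℕ} (hn : 1 ≤ n) (hα : ∑ i, α i = n - 1) :
    blockStart α (m + 1) = n + 1 := by
  rw [blockStart_last, hα]
  omega

lemma blockStart_le_succ {n : ℕ} (hn : 1 ≤ n) (hα : ∑ i, α i = n - 1) {ℓ : ℕ} (hℓ : ℓ ≤ m + 1) :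
    blockStart α ℓ ≤ n + 1 :=
  blockStart_last_eq hn hα ▸ blockStart_mono α hℓ

lemma le_of_blockStart_le_blockStart_add {ℓ : ℕ} {ℓ' : Fin (m + 1)} (t : Fin (α ℓ'))
    (h : blockStart α ℓ ≤ blockStart α ℓ' + t) : ℓ ≤ ℓ' :=
  Nat.lt_succ_iff.1 <| (blockStart_mono α).reflect_lt <| by rw [blockStart_succ]; omega

lemma exists_eq_blockStart_add {n : ℕ} (hα : ∑ i, α i = n - 1) {k : ℕ} (h2 : 2 ≤ k)
    (hk : k ≤ n) : ∃ (ℓ : Fin (m + 1)) (t : Fin (α ℓ)), k = blockStart α ℓ + t := by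
  set ℓ := blockIdx α k
  have hstart : blockStart α ℓ ≤ k :=
    Nat.findGreatest_spec (P := fun ℓ => blockStart α ℓ ≤ k) (Nat.zero_le m)
      (by rw [blockStart_zero]; exact h2)
  have hnext : k < blockStart α (ℓ + 1) := by
    rcases (Nat.lt_succ_iff.1 ℓ.isLt).lt_or_eq with hlt | heq
    · exact not_le.1 (Nat.findGreatest_is_greatest (P := fun ℓ => blockStart α ℓ ≤ k)
        (k := ℓ + 1) (Nat.lt_succ_self _) hlt)
    · rw [heq, blockStart_last_eq (by omega) hα]
      omega
  rw [blockStart_succ] at hnext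
  exact ⟨ℓ, ⟨k - blockStart α ℓ, by omega⟩, by dsimp only; omega⟩

variable {g : ∀ i, Fin (α i) → ℕ}

lemma glueAt_one : glueAt α g 1 = 1 := by
  simp [glueAt]

lemma glueAt_blockStart_add (ℓ : Fin (m + 1)) (t : Fin (α ℓ)) :
    glueAt α g (blockStart α ℓ + t) = g ℓ t + m * (blockStart α ℓ - 2) + ℓ := by
  have hidx : blockIdx α (blockStart α ℓ + t) = ℓ :=
    blockIdx_eq (by omega) (by rw [blockStart_succ]; omega)
  have h2 := two_le_blockStart α ℓ
  have hcongr : ∀ i (hi : i = ℓ) (h : blockStart α ℓ + t - blockStart α i < α i),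
      g i ⟨_, h⟩ = g ℓ t := by
    rintro _ rfl h
    simp
  rw [glueAt, dif_pos ⟨by omega, by rw [hidx]; simp⟩, hcongr _ hidx, hidx]

lemma glueAt_bounds (hg : ∀ i, g i ∈ PK m (α i)) (ℓ : Fin (m + 1)) (t : Fin (α ℓ)) :
    m * (blockStart α ℓ - 2) + 1 + ℓ ≤ glueAt α g (blockStart α ℓ + t) ∧
      glueAt α g (blockStart α ℓ + t) ≤ m * (blockStart α ℓ + t - 2) + 1 + ℓ := by
  rw [glueAt_blockStart_add]
  have := ((mem_PK.1 (hg ℓ)).2 t)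
  have : m * (blockStart α ℓ + t - 2) = m * (blockStart α ℓ - 2) + m * t := by
    rw [← Nat.mul_add]; congr 1; have := two_le_blockStart α ℓ; omega
  omega

lemma pget_glue {n k : ℕ} (h1 : 1 ≤ k) (h2 : k ≤ n) : pget (glue n g) k = glueAt α g k := by
  rw [pget_eq h1 h2, glue]
  show glueAt α g (k - 1 + 1) = _
  rw [Nat.sub_add_cancel h1]

end Glue

section Bijection

variable {m n : ℕ}

lemma glueAt_le_succ {α : Fin (m + 1) → ℕ} {g : ∀ i, Fin (α i) → ℕ} (hα : ∑ i, α i = n - 1)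
    (hg : ∀ i, g i ∈ PK m (α i)) {k : ℕ} (h1 : 1 ≤ k) (hk : k + 1 ≤ n) :
    glueAt α g k ≤ glueAt α g (k + 1) := by
  obtain ⟨ℓ', t', hk'⟩ := exists_eq_blockStart_add hα (k := k + 1) (by omega) hk
  have hlo' := (glueAt_bounds hg ℓ' t').1
  rw [← hk'] at hlo'
  rcases h1.lt_or_eq with h2 | rfl
  · obtain ⟨ℓ, t, hk⟩ := exists_eq_blockStart_add hα (k := k) h2 (by omega)
    have hup := (glueAt_bounds hg ℓ t).2
    rw [← hk] at hup
    have hle : ℓ ≤ ℓ' := le_of_blockStart_le_blockStart_add t' (by omega)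
    rcases hle.lt_or_eq with hlt | rfl
    · have := blockStart_mono α (show (ℓ : ℕ) + 1 ≤ ℓ' from hlt)
      rw [blockStart_succ] at this
      have := Nat.mul_le_mul_left m (show k - 2 ≤ blockStart α ℓ' - 2 by omega)
      have : (ℓ : ℕ) < ℓ' := hlt
      omega
    · have e := glueAt_blockStart_add (g := g) ℓ t
      have e' := glueAt_blockStart_add (g := g) ℓ t'
      rw [← hk] at e
      rw [← hk'] at e'
      have : g ℓ t ≤ g ℓ t' := (mem_PK.1 (hg ℓ)).1 (show (t : ℕ) ≤ t' by omega)
      omega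
  · rw [glueAt_one]
    omega

lemma glue_mem_PK {α : Fin (m + 1) → ℕ} {g : ∀ i, Fin (α i) → ℕ} (hn : 1 ≤ n)
    (hα : ∑ i, α i = n - 1) (hg : ∀ i, g i ∈ PK m (α i)) : glue n g ∈ PK m n := by
  refine mem_PK.2 ⟨?_, fun j => ?_⟩
  · obtain ⟨n, rfl⟩ : ∃ n', n = n' + 1 := ⟨n - 1, by omega⟩
    refine Fin.monotone_iff_le_succ.2 fun i => ?_
    simp only [glue, Fin.val_castSucc, Fin.val_succ]
    exact glueAt_le_succ hα hg (by omega) (by omega)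
  rcases Nat.eq_zero_or_pos (j : ℕ) with hj | hj
  · simp [glue, hj, glueAt_one]
  obtain ⟨ℓ, t, hk⟩ := exists_eq_blockStart_add hα (k := j + 1) (by omega) j.isLt
  have hb := glueAt_bounds hg ℓ t
  rw [← hk] at hb
  have : m * (j + 1 - 2) + m = m * j := by rw [← Nat.mul_succ]; congr 1; omega
  have := ℓ.is_le
  simp only [glue]
  omega

lemma ffixE_glue {α : Fin (m + 1) → ℕ} {g : ∀ i, Fin (α i) → ℕ} (hn : 1 ≤ n)
    (hα : ∑ i, α i = n - 1) (hg : ∀ i, g i ∈ PK m (α i)) {ℓ : ℕ} (hℓ : ℓ ≤ m + 1) :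
    ffixE m (glue n g) ℓ = blockStart α ℓ := by
  rcases Nat.eq_zero_or_pos ℓ with rfl | hℓ0
  · rw [ffixE_zero, blockStart_zero]
  rcases hℓ.lt_or_eq with hlt | rfl
  swap
  · rw [ffixE_last, blockStart_last_eq hn hα]
  rw [ffixE_of_pos_of_le hℓ0 (by omega)]
  have h2 := two_le_blockStart α ℓ
  have hJ := blockStart_le_succ hn hα hℓ
  refine ffix_eq_of h2 hJ (fun hJn => ?_) (fun k hk2 hk => ?_)
  · obtain ⟨ℓ', t, hk⟩ := exists_eq_blockStart_add hα h2 hJn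
    have hle : ℓ ≤ ℓ' := le_of_blockStart_le_blockStart_add t hk.le
    have := Nat.mul_le_mul_left m (Nat.sub_le_sub_right (blockStart_mono α hle) 2)
    have := (glueAt_bounds hg ℓ' t).1
    rw [← hk] at this
    rw [pget_glue (by omega) hJn]
    omega
  · obtain ⟨ℓ', t, hk'⟩ := exists_eq_blockStart_add hα hk2 (by omega)
    have hlt : (ℓ' : ℕ) < ℓ := (blockStart_mono α).reflect_lt (by omega)
    have := (glueAt_bounds hg ℓ' t).2
    rw [← hk'] at this
    rw [pget_glue (by omega) (by omega)]
    omega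

lemma firstReturn_glue {α : Fin (m + 1) → ℕ} {g : ∀ i, Fin (α i) → ℕ} (hn : 1 ≤ n)
    (hα : ∑ i, α i = n - 1) (hg : ∀ i, g i ∈ PK m (α i)) :
    firstReturn m (glue n g) = ⟨α, g⟩ := by
  have hE : ∀ ℓ ≤ m + 1, ffixE m (glue n g) ℓ = blockStart α ℓ :=
    fun ℓ hℓ => ffixE_glue hn hα hg hℓ
  have hlen : (firstReturn m (glue n g)).1 = α := funext fun i => by
    simp only [firstReturn, length_FRD]
    rw [hE _ (by omega), hE _ (by omega), blockStart_succ]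
    omega
  refine sigma_eq_mk hlen fun i t => ?_
  set t' := Fin.cast (congrFun hlen i) t
  have ht : (t : ℕ) = t' := rfl
  have h0 : 0 < α i := Nat.zero_lt_of_lt t'.isLt
  have hg0 : g i ⟨0, h0⟩ = 1 := by have := (mem_PK.1 (hg i)).2 ⟨0, h0⟩; rw [Fin.val_mk, mul_zero] at this; omega
  have e := glueAt_blockStart_add (g := g) i t'
  have e0 := glueAt_blockStart_add (g := g) i ⟨0, h0⟩
  rw [Nat.add_zero] at e0
  have hi := blockStart_le_succ hn hα (show (i : ℕ) + 1 ≤ m + 1 by omega)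
  rw [blockStart_succ] at hi
  have := t'.isLt
  have := two_le_blockStart α i
  refine (FRD_get (p := glue n g) (ℓ := i) t).trans ?_
  rw [hE _ (by omega), ht, pget_glue (by omega) (by omega), pget_glue (by omega) (by omega), e, e0,
    hg0]
  omega

lemma blockStart_firstReturn {p : Fin n → ℕ} (hn : 1 ≤ n) {ℓ : ℕ} (hℓ : ℓ ≤ m + 1) :
    blockStart (firstReturn m p).1 ℓ = ffixE m p ℓ := by
  induction ℓ with
  | zero => rw [blockStart_zero, ffixE_zero]
  | succ ℓ ih =>
    have hs := blockStart_succ (firstReturn m p).1 ⟨ℓ, by omega⟩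
    have hl : (firstReturn m p).1 ⟨ℓ, by omega⟩ = ffixE m p (ℓ + 1) - ffixE m p ℓ := length_FRD ℓ
    have := ffixE_mono (p := p) hn (by omega : ℓ ≤ ℓ + 1) hℓ
    dsimp only at hs
    rw [hs, ih (by omega)]
    omega

lemma sum_firstReturn {p : Fin n → ℕ} (hn : 1 ≤ n) : ∑ i, (firstReturn m p).1 i = n - 1 := by
  have := blockStart_firstReturn (m := m) (p := p) hn le_rfl
  rw [blockStart_last, ffixE_last] at this
  omega

lemma firstReturn_mem_PKParts {p : Fin n → ℕ} (hp : p ∈ PK m n) (hn : 1 ≤ n) :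
    firstReturn m p ∈ PKParts m n :=
  mem_PKParts.2 ⟨sum_firstReturn hn, fun i => FRD_mem_PK hp hn i.is_le⟩

lemma glue_firstReturn {p : Fin n → ℕ} (hp : p ∈ PK m n) (hn : 1 ≤ n) :
    glue n (firstReturn m p).2 = p := by
  funext j
  rcases Nat.eq_zero_or_pos (j : ℕ) with hj | hj
  · have := (mem_PK.1 hp).2 j
    simp only [glue, hj, zero_add, glueAt_one] at this ⊢
    omega
  obtain ⟨ℓ, t, hk⟩ := exists_eq_blockStart_add (sum_firstReturn (m := m) (p := p) hn)
    (k := j + 1) (by omega) j.isLt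
  have hJ := blockStart_firstReturn (m := m) (p := p) hn (ℓ := ℓ) (by omega)
  have ht : (t : ℕ) < ffixE m p (ℓ + 1) - ffixE m p ℓ := (length_FRD (p := p) ℓ) ▸ t.isLt
  have hstart := pget_ffixE hp hn ℓ.is_le (by omega)
  have hmono := pget_mono hp (k := ffixE m p ℓ) (k' := j + 1)
    (by have := two_le_ffixE (m := m) (p := p) hn ℓ; omega) (by omega) j.isLt
  rw [pget_succ] at hmono
  have hk' : j + 1 = ffixE m p ℓ + t := hJ ▸ hk
  have hget : (firstReturn m p).2 ℓ t = pget p (ffixE m p ℓ + t) - (pget p (ffixE m p ℓ) - 1) :=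
    FRD_get t
  have e := glueAt_blockStart_add (g := (firstReturn m p).2) ℓ t
  rw [← hk] at e
  rw [glue, e, hget, hJ, ← hk', pget_succ]
  omega

lemma sum_PK_comp_firstReturn {M : Type*} [AddCommMonoid M] (hn : 1 ≤ n)
    (f : (Σ α : Fin (m + 1) → ℕ, ∀ i, Fin (α i) → ℕ) → M) :
    ∑ p ∈ PK m n, f (firstReturn m p) = ∑ x ∈ PKParts m n, f x := by
  refine sum_nbij' (firstReturn m) (fun x => glue n x.2)
    (fun p hp => firstReturn_mem_PKParts hp hn) (fun x hx => ?_)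
    (fun p hp => glue_firstReturn hp hn) (fun x hx => ?_) (fun _ _ => rfl)
  all_goals obtain ⟨hα, hg⟩ := mem_PKParts.1 hx
  · exact glue_mem_PK hn hα hg
  · exact firstReturn_glue hn hα hg

end Bijection

lemma Cnt_eq_zero_of_lt {m n k : ℕ} (h : n < k) : Cnt m n k = 0 := by
  refine card_eq_zero.2 (filter_eq_empty_iff.2 fun p _ hp => ?_)
  have : luck m p ≤ n := (card_filter_le _ _).trans (by simp)
  omega

lemma sum_pow_eq_aeval_Rpoly {R : Type*} [CommSemiring R] [Algebra ℤ R] (q : R) {m n : ℕ}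
    (s : (Fin n → ℕ) → ℕ)
    (hs : ∀ k, ((PK m n).filter (fun p => s p = k)).card = Cnt m n k) :
    ∑ p ∈ PK m n, q ^ s p = Polynomial.aeval q (Rpoly m n) := by
  have hmaps : ∀ p ∈ PK m n, s p ∈ range (n + 1) := fun p hp => by
    by_contra h
    have hempty := hs (s p)
    rw [Cnt_eq_zero_of_lt (by simpa using h), card_eq_zero] at hempty
    exact (eq_empty_iff_forall_notMem.1 hempty) p (mem_filter.2 ⟨hp, rfl⟩)
  rw [Rpoly, map_sum, ← sum_fiberwise_of_maps_to hmaps]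
  refine sum_congr rfl fun k _ => ?_
  rw [sum_congr rfl fun p hp => by rw [(mem_filter.1 hp).2], sum_const, hs, nsmul_eq_mul]
  simp

theorem stmt15_general (m : ℕ)
    (S : Fin (m + 1) → (n : ℕ) → (Fin n → ℕ) → ℕ) (c : Fin (m + 1) → ℕ)
    (hdist : ∀ (i : Fin (m + 1)) (n k : ℕ),
      ((PK m n).filter (fun p => S i n p = k)).card = Cnt m n k)
    (hrec : ∀ (i : Fin (m + 1)) (n : ℕ), 1 ≤ n → ∀ p ∈ PK m n,
      S i n p = S i (FRD m p (i : ℕ)).length (fun t => (FRD m p (i : ℕ)).get t) + c i)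
    (n : ℕ) (hn : 1 ≤ n) :
    ∑ p ∈ PK m n,
        ∏ i : Fin (m + 1), (MvPolynomial.X i : MvPolynomial (Fin (m + 1)) ℤ) ^ S i n p =
      (∏ i : Fin (m + 1), (MvPolynomial.X i : MvPolynomial (Fin (m + 1)) ℤ) ^ c i) *
        ∑ α ∈ Finset.Nat.antidiagonalTuple (m + 1) (n - 1),
          ∏ i : Fin (m + 1),
            Polynomial.aeval (MvPolynomial.X i : MvPolynomial (Fin (m + 1)) ℤ) (Rpoly m (α i)) := by
  set X : Fin (m + 1) → MvPolynomial (Fin (m + 1)) ℤ := MvPolynomial.X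
  have hsplit : ∀ p ∈ PK m n, ∏ i, X i ^ S i n p =
      (∏ i, X i ^ c i) * ∏ i, X i ^ S i ((firstReturn m p).1 i) ((firstReturn m p).2 i) :=
    fun p hp => by
      rw [← prod_mul_distrib]
      exact prod_congr rfl fun i _ => by rw [hrec i n hn p hp, pow_add, mul_comm]; rfl
  rw [sum_congr rfl hsplit, ← mul_sum,
    sum_PK_comp_firstReturn hn fun x => ∏ i, X i ^ S i (x.1 i) (x.2 i), PKParts, sum_sigma]
  congr 1
  refine sum_congr rfl fun α _ => ?_
  rw [← Fintype.prod_congr _ _ fun i => sum_pow_eq_aeval_Rpoly (X i) (S i (α i)) (hdist i (α i)),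
    prod_univ_sum]

theorem stmt15 (m : ℕ) (hm : 1 ≤ m)
    (S : Fin (m + 1) → (n : ℕ) → (Fin n → ℕ) → ℕ) (c : Fin (m + 1) → ℕ)
    (hdist : ∀ (i : Fin (m + 1)) (n k : ℕ),
      ((PK m n).filter (fun p => S i n p = k)).card = Cnt m n k)
    (hrec : ∀ (i : Fin (m + 1)) (n : ℕ), 1 ≤ n → ∀ p ∈ PK m n,
      S i n p = S i (FRD m p (i : ℕ)).length (fun t => (FRD m p (i : ℕ)).get t) + c i)
    (n : ℕ) (hn : 1 ≤ n) :
    ∑ p ∈ PK m n,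
        ∏ i : Fin (m + 1), (MvPolynomial.X i : MvPolynomial (Fin (m + 1)) ℤ) ^ S i n p =
      (∏ i : Fin (m + 1), (MvPolynomial.X i : MvPolynomial (Fin (m + 1)) ℤ) ^ c i) *
        ∑ α ∈ Finset.Nat.antidiagonalTuple (m + 1) (n - 1),
          ∏ i : Fin (m + 1),
            Polynomial.aeval (MvPolynomial.X i : MvPolynomial (Fin (m + 1)) ℤ) (Rpoly m (α i)) :=
  stmt15_general m S c hdist hrec n hn

end
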